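/- Let G be a balanced bipartite graph with parts X, Y and S ⊆ X. Let C be a feasible cycle of length ≥ 6 that is a minimal system of G, and let x ∈ S \ V(C), y ∈ Y \ V(C). If the number of edges from {x, y} to C is at least |C|/2 + 1, then xy ∉ E(G), and G[V(C) ∪ {x,y}] contains a cycle C' and an edge from x to some vertex y_i of C, with the edge disjoint from C', such that |C'| = |C| and |S ∩ V(C')| = |S ∩ V(C)|. -/

import Mathlib

/-!
Index `C` by `ZMod n` starting at a vertex of `S`. Two neighbours on `C` of an outside vertex, or
of the two ends of an outside edge, close each of the two arcs of `C` between them into a cycle,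
and by minimality such a cycle that is shorter than `C` meets `S` at most once.

For `x ∈ S`, using the arc through the base vertex, `x` has at most two neighbours on `C`, and two
of them are two apart with the vertex between them outside `S`. As `C` alternates between `X` and
`Y`, counting forces `y` to see all but at most one of the `n / 2` vertices of `C` in `X`. Then
some neighbour `p u` of `x` has both its neighbours on `C` adjacent to `y`, and `y` can replace
`p u` in `C`; otherwise `y` sees both ends of an arc of length `n - 4` carrying all of `S ∩ C`.
If `xy` were an edge, every vertex of `S ∩ C` adjacent to `y` would be at distance exactly `3`
along `C` from every neighbour of `x`, and counting leaves no room for two vertices of `S` on `C`.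
-/

open Finset Function

namespace ZMod

variable {n : ℕ}

theorem natCast_ne_zero_of_pos_of_lt {m : ℕ} (hm0 : 0 < m) (hmn : m < n) : (m : ZMod n) ≠ 0 :=
  fun h ↦ absurd (Nat.eq_zero_of_dvd_of_lt ((natCast_eq_zero_iff m n).mp h) hmn) hm0.ne'

variable [NeZero n]

theorem eq_add_of_val_eq_add {a b : ZMod n} {k : ℕ} (h : b.val = a.val + k) : b = a + k := by
  rw [← natCast_zmod_val b, h, Nat.cast_add, natCast_zmod_val]

theorem natCast_sub_val (a : ZMod n) : ((n - a.val : ℕ) : ZMod n) = -a := by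
  rw [Nat.cast_sub a.val_lt.le, natCast_self, natCast_zmod_val, zero_sub]

theorem exists_le_add_natCast_eq {s t : ZMod n} {k : ℕ} (h : ∀ i < k, t + (i + 1 : ℕ) ≠ s) :
    ∃ r ≤ n - 1 - k, s + r = t := by
  refine ⟨(t - s).val, ?_, by rw [natCast_zmod_val, add_sub_cancel]⟩
  by_contra! hlt
  have := (t - s).val_lt
  refine h (n - 1 - (t - s).val) (by omega) ?_
  rw [show n - 1 - (t - s).val + 1 = n - (t - s).val by omega, natCast_sub_val, neg_sub,
    add_sub_cancel]

theorem two_mul_card_filter_of_iff_not (P : ZMod n → Prop) [DecidablePred P]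
    (hP : ∀ t, P (t + 1) ↔ ¬ P t) : 2 * #{t | P t} = n := by
  have h : #{t | P t} = #{t | ¬ P t} := by
    refine card_nbij' (· + 1) (· - 1) (fun t ↦ by simp [hP]) (fun t ht ↦ ?_)
      (fun t _ ↦ add_sub_cancel_right t 1) (fun t _ ↦ sub_add_cancel t 1)
    have := hP (t - 1)
    simp_all
  have := card_filter_add_card_filter_not (s := univ) fun t ↦ P t
  rw [card_univ, ZMod.card] at this
  omega

end ZMod

namespace SimpleGraph

variable {V : Type*} {G : SimpleGraph V}

theorem Walk.IsPath.isCycle_cons_concat {a b w : V} {q : G.Walk a b} (hq : q.IsPath)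
    (hw : w ∉ q.support) (hwa : G.Adj w a) (hbw : G.Adj b w) (hab : a ≠ b) :
    (Walk.cons hwa (q.concat hbw)).IsCycle := by
  refine (Walk.cons_isCycle_iff _ _).mpr ⟨hq.concat hw hbw, fun he ↦ ?_⟩
  rw [Walk.edges_concat, List.concat_eq_append, List.mem_append, List.mem_singleton,
    Sym2.eq_iff] at he
  rcases he with he | ⟨rfl, -⟩ | ⟨-, rfl⟩
  · exact hw (q.fst_mem_support_of_mem_edges he)
  · exact hw q.end_mem_support
  · exact hab rfl

section ZModIndexed

variable {n : ℕ}

def arcWalk (p : ZMod n → V) (hadj : ∀ t, G.Adj (p t) (p (t + 1))) (s : ZMod n) :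
    (m : ℕ) → G.Walk (p s) (p (s + m))
  | 0 => Walk.nil.copy rfl (by simp)
  | m + 1 => (Walk.cons (hadj s) (arcWalk p hadj (s + 1) m)).copy rfl (by push_cast; ring_nf)

variable {p : ZMod n → V}

section arcWalk

variable (hadj : ∀ t, G.Adj (p t) (p (t + 1)))

theorem length_arcWalk (s : ZMod n) (m : ℕ) : (arcWalk p hadj s m).length = m := by
  induction m generalizing s with
  | zero => simp [arcWalk]
  | succ m ih => simp [arcWalk, ih]

theorem support_arcWalk (s : ZMod n) (m : ℕ) :
    (arcWalk p hadj s m).support = (List.range (m + 1)).map fun r : ℕ ↦ p (s + r) := by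
  induction m generalizing s with
  | zero => simp [arcWalk]
  | succ m ih =>
    rw [arcWalk, Walk.support_copy, Walk.support_cons, List.range_succ_eq_map (n := m + 1), ih]
    simp only [List.map_cons, List.map_map, Nat.cast_zero, add_zero]
    refine congrArg _ (List.map_congr_left fun r _ ↦ ?_)
    simp only [Function.comp_apply, Nat.cast_succ, add_assoc, add_comm (1 : ZMod n)]

theorem mem_support_arcWalk {s : ZMod n} {m : ℕ} {w : V} :
    w ∈ (arcWalk p hadj s m).support ↔ ∃ r ≤ m, p (s + r) = w := by
  simp [support_arcWalk]

theorem isPath_arcWalk [NeZero n] (hp : Injective p) (s : ZMod n) {m : ℕ} (hm : m < n) :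
    (arcWalk p hadj s m).IsPath := by
  rw [Walk.isPath_def, support_arcWalk]
  refine List.nodup_range.map_on fun a ha b hb hab ↦ ?_
  simp only [List.mem_range] at ha hb
  have := congrArg ZMod.val (add_left_cancel (hp hab))
  rwa [ZMod.val_cast_of_lt (by omega), ZMod.val_cast_of_lt (by omega)] at this

end arcWalk

variable [NeZero n]

theorem exists_isCycle_arc (hadj : ∀ t, G.Adj (p t) (p (t + 1)))
    (hp : Injective p) {z : V} (hz : ∀ t, p t ≠ z) {s : ZMod n} {m : ℕ} (hm0 : 0 < m)
    (hmn : m < n) (h₁ : G.Adj z (p s))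
    (h₂ : G.Adj (p (s + m)) z) :
    ∃ D : G.Walk z z, D.IsCycle ∧ D.length = m + 2 ∧
      ∀ w, w ∈ D.support ↔ w = z ∨ ∃ r ≤ m, p (s + r) = w := by
  have hz' : z ∉ (arcWalk p hadj s m).support := by
    rw [mem_support_arcWalk]
    rintro ⟨r, -, hr⟩
    exact hz _ hr
  have hne : p s ≠ p (s + m) := fun h ↦
    ZMod.natCast_ne_zero_of_pos_of_lt hm0 hmn (left_eq_add.mp (hp h))
  refine ⟨_, (isPath_arcWalk hadj hp s hmn).isCycle_cons_concat hz' h₁ h₂ hne, ?_, fun w ↦ ?_⟩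
  · simp [length_arcWalk]
  · simp only [Walk.support_cons, Walk.support_concat, List.mem_cons, List.mem_append,
      mem_support_arcWalk]
    aesop

theorem exists_isCycle_arc_edge (hadj : ∀ t, G.Adj (p t) (p (t + 1)))
    (hp : Injective p) {z₁ z₂ : V} (hz₁ : ∀ t, p t ≠ z₁) (hz₂ : ∀ t, p t ≠ z₂) {s : ZMod n}
    {m : ℕ} (hmn : m < n) (h : G.Adj z₁ z₂) (h₁ : G.Adj z₁ (p s)) (h₂ : G.Adj (p (s + m)) z₂) :
    ∃ D : G.Walk z₁ z₁, D.IsCycle ∧ D.length = m + 3 ∧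
      ∀ w, w ∈ D.support ↔ w = z₁ ∨ w = z₂ ∨ ∃ r ≤ m, p (s + r) = w := by
  have hq : ((arcWalk p hadj s m).concat h₂).IsPath := by
    refine (isPath_arcWalk hadj hp s hmn).concat ?_ h₂
    rw [mem_support_arcWalk]
    rintro ⟨r, -, hr⟩
    exact hz₂ _ hr
  have hz₁' : z₁ ∉ ((arcWalk p hadj s m).concat h₂).support := by
    rw [Walk.support_concat, List.mem_append, List.mem_singleton, mem_support_arcWalk]
    rintro (⟨r, -, hr⟩ | rfl)
    exacts [hz₁ _ hr, h.ne rfl]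
  refine ⟨_, hq.isCycle_cons_concat hz₁' h₁ h.symm (hz₂ s), ?_, fun w ↦ ?_⟩
  · simp [length_arcWalk]
  · simp only [Walk.support_cons, Walk.support_concat, List.mem_cons, List.mem_append,
      mem_support_arcWalk]
    aesop

theorem exists_isCycle_replace (hadj : ∀ t, G.Adj (p t) (p (t + 1)))
    (hp : Injective p) (hn : 3 ≤ n) {y : V} (hy : ∀ t, p t ≠ y) {u : ZMod n}
    (h₁ : G.Adj y (p (u + 1))) (h₂ : G.Adj y (p (u - 1))) :
    ∃ D : G.Walk y y, D.IsCycle ∧ D.length = n ∧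
      ∀ w, w ∈ D.support ↔ w = y ∨ ∃ t ≠ u, p t = w := by
  have hend : u + 1 + ((n - 2 : ℕ) : ZMod n) = u - 1 := by
    rw [Nat.cast_sub (by omega), ZMod.natCast_self]; ring
  obtain ⟨D, hD, hlen, hsupp⟩ := exists_isCycle_arc hadj hp hy (m := n - 2) (by omega) (by omega)
    h₁ (by rw [hend]; exact h₂.symm)
  refine ⟨D, hD, by omega, fun w ↦ (hsupp w).trans (or_congr_right ⟨?_, ?_⟩)⟩
  · rintro ⟨r, hr, rfl⟩
    refine ⟨u + 1 + r, fun h ↦ ?_, rfl⟩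
    refine ZMod.natCast_ne_zero_of_pos_of_lt (n := n) (m := r + 1) (by omega) (by omega) ?_
    push_cast
    linear_combination h
  · rintro ⟨t, ht, rfl⟩
    obtain ⟨r, hr, h⟩ := ZMod.exists_le_add_natCast_eq (s := u + 1) (t := t) (k := 1)
      fun i hi h ↦ by
        obtain rfl : i = 0 := by omega
        exact ht (by push_cast at h; linear_combination h)
    exact ⟨r, by omega, congrArg p h⟩

variable [DecidableEq V]

theorem card_filter_eq_card_filter_comp (hp : Injective p)
    {s : Finset V} (hs : ∀ w, w ∈ s ↔ ∃ t, p t = w) (P : V → Prop) [DecidablePred P] :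
    #(s.filter P) = #{t | P (p t)} := by
  obtain rfl : s = univ.image p := by ext w; simp [hs]
  rw [filter_image, card_image_of_injective _ hp]

variable {X : Finset V}

theorem two_mul_card_filter_mem (hadj : ∀ t, G.Adj (p t) (p (t + 1)))
    (hX : ∀ a b, G.Adj a b → (a ∈ X ↔ b ∉ X)) : 2 * #{t | p t ∈ X} = n :=
  ZMod.two_mul_card_filter_of_iff_not _ fun t ↦ by have := hX _ _ (hadj t); tauto

theorem filter_adj_subset_filter_mem [DecidableRel G.Adj]
    (hX : ∀ a b, G.Adj a b → (a ∈ X ↔ b ∉ X)) {y : V} (hyX : y ∉ X) :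
    ({t | G.Adj y (p t)} : Finset (ZMod n)) ⊆ ({t | p t ∈ X} : Finset (ZMod n)) := fun t ht ↦ by
  simp only [mem_filter, mem_univ, true_and] at ht ⊢
  have := hX _ _ ht
  tauto

end ZModIndexed

theorem Walk.getVert_natCast_val_of_le {u : V} (c : G.Walk u u) {k : ℕ} (hk : k ≤ c.length) :
    c.getVert ((k : ZMod c.length).val) = c.getVert k := by
  rw [ZMod.val_natCast]
  rcases hk.lt_or_eq with hk | rfl
  · rw [Nat.mod_eq_of_lt hk]
  · rw [Nat.mod_self, Walk.getVert_zero, Walk.getVert_length]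

theorem Walk.IsCycle.exists_zmod_indexing {u : V} {c : G.Walk u u} (hc : c.IsCycle) {a : V}
    (ha : a ∈ c.support) :
    ∃ p : ZMod c.length → V, Injective p ∧ (∀ t, G.Adj (p t) (p (t + 1))) ∧
      (∀ w, w ∈ c.support ↔ ∃ t, p t = w) ∧ p 0 = a := by
  have : NeZero c.length := ⟨by have := hc.three_le_length; omega⟩
  obtain ⟨i, rfl, hi⟩ := Walk.mem_support_iff_exists_getVert.mp ha
  refine ⟨fun t ↦ c.getVert (t + (i : ZMod c.length)).val, fun t t' h ↦ ?_, fun t ↦ ?_,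
    fun w ↦ ⟨fun hw ↦ ?_, ?_⟩, ?_⟩
  · have hlt (t : ZMod c.length) : (t + (i : ZMod c.length)).val ≤ c.length - 1 := by
      have := ZMod.val_lt (t + (i : ZMod c.length))
      omega
    exact add_right_cancel (ZMod.val_injective _ (hc.getVert_injOn' (hlt t) (hlt t') h))
  · set k := (t + (i : ZMod c.length)).val
    have hsucc : t + 1 + (i : ZMod c.length) = ((k + 1 : ℕ) : ZMod c.length) := by
      push_cast
      rw [ZMod.natCast_zmod_val]
      ring
    have hk : k < c.length := ZMod.val_lt _
    simp only
    rw [hsucc, c.getVert_natCast_val_of_le hk]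
    exact c.adj_getVert_succ hk
  · obtain ⟨k, rfl, hk⟩ := Walk.mem_support_iff_exists_getVert.mp hw
    exact ⟨k - i, by simp only [sub_add_cancel, c.getVert_natCast_val_of_le hk]⟩
  · rintro ⟨t, rfl⟩
    exact c.getVert_mem_support _
  · simp only [zero_add, c.getVert_natCast_val_of_le hi]

theorem mem_iff_notMem_of_adj {X Y : Finset V} (hdisj : Disjoint X Y)
    (hbip : ∀ a b, G.Adj a b → (a ∈ X ∧ b ∈ Y) ∨ (a ∈ Y ∧ b ∈ X)) (a b : V) (h : G.Adj a b) :
    a ∈ X ↔ b ∉ X := by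
  rcases hbip a b h with ⟨ha, hb⟩ | ⟨ha, hb⟩
  · simp [ha, disjoint_right.mp hdisj hb]
  · simp [hb, disjoint_right.mp hdisj ha]

theorem mem_of_adj_of_adj {X : Finset V} (hX : ∀ a b, G.Adj a b → (a ∈ X ↔ b ∉ X)) {a b c : V}
    (hab : G.Adj a b) (hbc : G.Adj b c) (ha : a ∈ X) : c ∈ X := by
  have := hX _ _ hab
  have := hX _ _ hbc
  tauto

variable [DecidableEq V]

/-- `C` is a minimal system iff it is feasible and `G.NoShorterFeasibleCycle S C.length`. -/
def NoShorterFeasibleCycle (G : SimpleGraph V) (S : Finset V) (n : ℕ) : Prop :=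
  ∀ (u : V) (D : G.Walk u u), D.IsCycle → 2 ≤ #(S ∩ D.support.toFinset) → n ≤ D.length

namespace NoShorterFeasibleCycle

variable {S X : Finset V} {n : ℕ} {p : ZMod n → V} {x y : V}

theorem le_length (hmin : G.NoShorterFeasibleCycle S n) {u a b : V} {D : G.Walk u u}
    (hD : D.IsCycle) (ha : a ∈ D.support) (hb : b ∈ D.support) (hab : a ≠ b) (haS : a ∈ S)
    (hbS : b ∈ S) : n ≤ D.length :=
  hmin u D hD <| one_lt_card.mpr ⟨a, by simp [ha, haS], b, by simp [hb, hbS], hab⟩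

variable [NeZero n]

theorem le_add_two (hmin : G.NoShorterFeasibleCycle S n)
    (hadj : ∀ t, G.Adj (p t) (p (t + 1))) (hp : Injective p) {z : V} (hz : ∀ t, p t ≠ z)
    {s : ZMod n} {m : ℕ} (hm0 : 0 < m) (hmn : m < n) (h₁ : G.Adj z (p s))
    (h₂ : G.Adj (p (s + m)) z) {a b : V} (ha : a = z ∨ ∃ r ≤ m, p (s + r) = a)
    (hb : b = z ∨ ∃ r ≤ m, p (s + r) = b) (hab : a ≠ b) (haS : a ∈ S) (hbS : b ∈ S) :
    n ≤ m + 2 := by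
  obtain ⟨D, hD, hlen, hsupp⟩ := exists_isCycle_arc hadj hp hz hm0 hmn h₁ h₂
  exact hlen ▸ hmin.le_length hD ((hsupp a).mpr ha) ((hsupp b).mpr hb) hab haS hbS

theorem le_add_three (hmin : G.NoShorterFeasibleCycle S n)
    (hadj : ∀ t, G.Adj (p t) (p (t + 1))) (hp : Injective p) {z₁ z₂ : V}
    (hz₁ : ∀ t, p t ≠ z₁) (hz₂ : ∀ t, p t ≠ z₂) {s : ZMod n} {m : ℕ} (hmn : m < n)
    (h : G.Adj z₁ z₂) (h₁ : G.Adj z₁ (p s)) (h₂ : G.Adj (p (s + m)) z₂) {a b : V}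
    (ha : a = z₁ ∨ a = z₂ ∨ ∃ r ≤ m, p (s + r) = a)
    (hb : b = z₁ ∨ b = z₂ ∨ ∃ r ≤ m, p (s + r) = b) (hab : a ≠ b) (haS : a ∈ S) (hbS : b ∈ S) :
    n ≤ m + 3 := by
  obtain ⟨D, hD, hlen, hsupp⟩ := exists_isCycle_arc_edge hadj hp hz₁ hz₂ hmn h h₁ h₂
  exact hlen ▸ hmin.le_length hD ((hsupp a).mpr ha) ((hsupp b).mpr hb) hab haS hbS

theorem val_eq_add_two_or (hmin : G.NoShorterFeasibleCycle S n)
    (hadj : ∀ t, G.Adj (p t) (p (t + 1))) (hp : Injective p)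
    (hX : ∀ a b, G.Adj a b → (a ∈ X ↔ b ∉ X)) (h0 : p 0 ∈ S) (hx : ∀ t, p t ≠ x) (hxS : x ∈ S)
    {u w : ZMod n} (hu : G.Adj x (p u)) (hw : G.Adj x (p w)) (huw : u ≠ w) :
    w.val = u.val + 2 ∨ u.val = w.val + 2 := by
  -- the arc from `w` forward to `u` passes through `p 0 ∈ S`
  have hle {u w : ZMod n} (hu : G.Adj x (p u)) (hw : G.Adj x (p w)) (hlt : u.val < w.val) :
      w.val ≤ u.val + 2 := by
    have := w.val_lt
    have hr : w + ((n - w.val : ℕ) : ZMod n) = 0 := by rw [ZMod.natCast_sub_val, add_neg_cancel]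
    have hm : w + ((n - w.val + u.val : ℕ) : ZMod n) = u := by
      rw [Nat.cast_add, ← add_assoc, hr, ZMod.natCast_zmod_val, zero_add]
    have := hmin.le_add_two hadj hp hx (by omega) (by omega) hw (hm ▸ hu.symm) (Or.inl rfl)
      (Or.inr ⟨n - w.val, by omega, hr ▸ rfl⟩) (hx 0).symm hxS h0
    omega
  -- `x`, `p t` and `p (t + 1)` would form a triangle
  have hne {u w : ZMod n} (hu : G.Adj x (p u)) (hw : G.Adj x (p w)) : w.val ≠ u.val + 1 := by
    intro h
    rw [ZMod.eq_add_of_val_eq_add h, Nat.cast_one] at hw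
    have := hX _ _ hu
    have := hX _ _ hw
    have := hX _ _ (hadj u)
    tauto
  have := (ZMod.val_injective n).ne huw
  have := hle hu hw
  have := hle hw hu
  have := hne hu hw
  have := hne hw hu
  omega

theorem card_adj_le_two [DecidableRel G.Adj] (hmin : G.NoShorterFeasibleCycle S n)
    (hadj : ∀ t, G.Adj (p t) (p (t + 1))) (hp : Injective p)
    (hX : ∀ a b, G.Adj a b → (a ∈ X ↔ b ∉ X)) (h0 : p 0 ∈ S) (hx : ∀ t, p t ≠ x)
    (hxS : x ∈ S) : #{t | G.Adj x (p t)} ≤ 2 := by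
  by_contra! h
  obtain ⟨a, ha, b, hb, c, hc, hab, hac, hbc⟩ := two_lt_card.mp h
  simp only [mem_filter, mem_univ, true_and] at ha hb hc
  have := hmin.val_eq_add_two_or hadj hp hX h0 hx hxS ha hb hab
  have := hmin.val_eq_add_two_or hadj hp hX h0 hx hxS ha hc hac
  have := hmin.val_eq_add_two_or hadj hp hX h0 hx hxS hb hc hbc
  omega

theorem notMem_of_adj_of_adj_add_two (hmin : G.NoShorterFeasibleCycle S n)
    (hadj : ∀ t, G.Adj (p t) (p (t + 1))) (hp : Injective p) (hn : 4 < n)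
    (hx : ∀ t, p t ≠ x) (hxS : x ∈ S) {w : ZMod n} (hw : G.Adj x (p w))
    (hw₂ : G.Adj x (p (w + 2))) : p (w + 1) ∉ S := fun h ↦ by
  have := hmin.le_add_two hadj hp hx (m := 2) (by omega) (by omega) hw
    (by simpa using hw₂.symm) (Or.inl rfl) (Or.inr ⟨1, by omega, by simp⟩) (hx _).symm hxS h
  omega

theorem eq_add_three (hmin : G.NoShorterFeasibleCycle S n)
    (hadj : ∀ t, G.Adj (p t) (p (t + 1))) (hp : Injective p) (hn : 6 ≤ n)
    (hx : ∀ t, p t ≠ x) (hy : ∀ t, p t ≠ y) (hxS : x ∈ S) (hxy : G.Adj x y) {u j : ZMod n}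
    (hu : G.Adj x (p u)) (hj : G.Adj y (p j)) (hjS : p j ∈ S) : j = u + 3 := by
  have hju : u + ((j - u).val : ZMod n) = j := by rw [ZMod.natCast_zmod_val, add_sub_cancel]
  have hui : j + ((u - j).val : ZMod n) = u := by rw [ZMod.natCast_zmod_val, add_sub_cancel]
  -- the two cycles through the edge `xy` and either arc of `C` between `p u` and `p j`
  have h₁ := hmin.le_add_three hadj hp hx hy (j - u).val_lt hxy hu
    (by rw [hju]; exact hj.symm) (Or.inl rfl) (Or.inr (Or.inr ⟨_, le_rfl, congrArg p hju⟩))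
    (hx j).symm hxS hjS
  have h₂ := hmin.le_add_three hadj hp hy hx (u - j).val_lt hxy.symm hj
    (by rw [hui]; exact hu.symm) (Or.inr (Or.inl rfl)) (Or.inr (Or.inr ⟨0, by omega, by simp⟩))
    (hx j).symm hxS hjS
  have hsum : (u - j).val = if j - u = 0 then 0 else n - (j - u).val := by
    rw [← neg_sub, ZMod.neg_val]
  have h3 : (j - u).val = 3 := by
    split_ifs at hsum with h
    · rw [h, ZMod.val_zero] at h₁; omega
    · have := (j - u).val_lt; omega
  rw [← hju, h3, Nat.cast_ofNat]

theorem card_le_one_of_adj_add_three_of_adj_sub_one (hmin : G.NoShorterFeasibleCycle S n)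
    (hadj : ∀ t, G.Adj (p t) (p (t + 1))) (hp : Injective p) (hn : 6 ≤ n)
    (hy : ∀ t, p t ≠ y) {w : ZMod n} (h₁ : G.Adj y (p (w + 3))) (h₂ : G.Adj y (p (w - 1)))
    (hS : ∀ t, p t ∈ S → t ≠ w ∧ t ≠ w + 1 ∧ t ≠ w + 2) : #{t | p t ∈ S} ≤ 1 := by
  -- all of `S ∩ C` lies on the arc from `w + 3` forward to `w - 1`, of length `n - 4`
  have harc (t : ZMod n) (ht : p t ∈ S) : ∃ r ≤ n - 4, p (w + 3 + r) = p t := by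
    obtain ⟨h0, h1, h2⟩ := hS t ht
    obtain ⟨r, hr, rfl⟩ := ZMod.exists_le_add_natCast_eq (s := w + 3) (t := t) (k := 3)
      fun i hi h ↦ by
        interval_cases i <;> push_cast at h
        exacts [h2 (by linear_combination h), h1 (by linear_combination h),
          h0 (by linear_combination h)]
    exact ⟨r, by omega, rfl⟩
  have hend : w + 3 + ((n - 4 : ℕ) : ZMod n) = w - 1 := by
    rw [Nat.cast_sub (by omega), ZMod.natCast_self]; ring
  refine card_le_one.mpr fun a ha b hb ↦ by_contra fun hab ↦ ?_
  simp only [mem_filter, mem_univ, true_and] at ha hb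
  have := hmin.le_add_two hadj hp hy (by omega) (by omega) h₁ (hend ▸ h₂.symm)
    (Or.inr (harc a ha)) (Or.inr (harc b hb)) (hp.ne hab) ha hb
  omega

theorem not_adj [DecidableRel G.Adj] (hmin : G.NoShorterFeasibleCycle S n)
    (hadj : ∀ t, G.Adj (p t) (p (t + 1))) (hp : Injective p) (hn : 6 ≤ n)
    (hX : ∀ a b, G.Adj a b → (a ∈ X ↔ b ∉ X)) (hSX : S ⊆ X) (h0 : p 0 ∈ S)
    (hS : 2 ≤ #{t | p t ∈ S}) (hx : ∀ t, p t ≠ x) (hy : ∀ t, p t ≠ y) (hxS : x ∈ S)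
    (hyX : y ∉ X) (hcard : n / 2 + 1 ≤ #{t | G.Adj x (p t)} + #{t | G.Adj y (p t)}) :
    ¬ G.Adj x y := by
  intro hxy
  have hE := two_mul_card_filter_mem hadj hX
  have hA := hmin.card_adj_le_two hadj hp hX h0 hx hxS
  set A : Finset (ZMod n) := {t | G.Adj x (p t)}
  set B : Finset (ZMod n) := {t | G.Adj y (p t)}
  set T : Finset (ZMod n) := {t | p t ∈ S}
  set E : Finset (ZMod n) := {t | p t ∈ X}
  have hBE : B ⊆ E := filter_adj_subset_filter_mem hX hyX
  have hTE : T ⊆ E := fun t ht ↦ by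
    simp only [T, E, mem_filter, mem_univ, true_and] at ht ⊢
    exact hSX ht
  have hBT : #B + #T ≤ #E + #(B ∩ T) := by
    rw [← card_union_add_card_inter]
    exact Nat.add_le_add_right (card_le_card (union_subset hBE hTE)) _
  have h3 (u) (hu : u ∈ A) (j) (hj : j ∈ B ∩ T) : j = u + 3 := by
    simp only [A, B, T, mem_inter, mem_filter, mem_univ, true_and] at hu hj
    exact hmin.eq_add_three hadj hp hn hx hy hxS hxy hu hj.1 hj.2
  have hB := card_le_card hBE
  rcases (B ∩ T).eq_empty_or_nonempty with h | ⟨j, hj⟩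
  · rw [h, card_empty] at hBT
    omega
  · have hA₁ : #A ≤ 1 := card_le_one.mpr fun u hu v hv ↦
      add_right_cancel ((h3 u hu j hj).symm.trans (h3 v hv j hj))
    obtain ⟨u, hu⟩ : A.Nonempty := card_pos.mp (by omega)
    have : #(B ∩ T) ≤ 1 := card_le_one.mpr fun j hj j' hj' ↦
      (h3 u hu j hj).trans (h3 u hu j' hj').symm
    omega

theorem exists_adj_sub_one_adj_add_one_of_adj_add_two [DecidableRel G.Adj]
    (hmin : G.NoShorterFeasibleCycle S n) (hadj : ∀ t, G.Adj (p t) (p (t + 1)))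
    (hp : Injective p) (hn : 6 ≤ n) (hX : ∀ a b, G.Adj a b → (a ∈ X ↔ b ∉ X)) (hSX : S ⊆ X)
    (hS : 2 ≤ #{t | p t ∈ S}) (hx : ∀ t, p t ≠ x) (hy : ∀ t, p t ≠ y) (hxS : x ∈ S)
    (hyX : y ∉ X) (hB : #{t | p t ∈ X} ≤ #{t | G.Adj y (p t)} + 1) {w : ZMod n}
    (hw : G.Adj x (p w)) (hw₂ : G.Adj x (p (w + 2))) :
    ∃ u, G.Adj x (p u) ∧ G.Adj y (p (u - 1)) ∧ G.Adj y (p (u + 1)) := by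
  have hmiss {a b : ZMod n} (ha : p a ∈ X) (hb : p b ∈ X) (hab : a ≠ b) :
      G.Adj y (p a) ∨ G.Adj y (p b) := by
    by_contra! h
    have hsub : ({t | G.Adj y (p t)} : Finset (ZMod n)) ⊆
        (({t | p t ∈ X} : Finset (ZMod n)).erase a).erase b := fun t ht ↦
      mem_erase.mpr ⟨by rintro rfl; simp_all, mem_erase.mpr ⟨by rintro rfl; simp_all,
        filter_adj_subset_filter_mem hX hyX ht⟩⟩
    have := card_le_card hsub
    rw [card_erase_of_mem (by simp [hab.symm, hb]), card_erase_of_mem (by simpa)] at this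
    have := two_mul_card_filter_mem hadj hX
    omega
  have hxX := hSX hxS
  have hm1 : p (w - 1) ∈ X := mem_of_adj_of_adj hX hw (by simpa using (hadj (w - 1)).symm) hxX
  have hp1 : p (w + 1) ∈ X := mem_of_adj_of_adj hX hw (hadj w) hxX
  have hp3 : p (w + 3) ∈ X :=
    mem_of_adj_of_adj hX hw₂ (by rw [show w + 3 = w + 2 + 1 by ring]; exact hadj _) hxX
  have h2 : (2 : ZMod n) ≠ 0 := by
    exact_mod_cast ZMod.natCast_ne_zero_of_pos_of_lt (n := n) (m := 2) (by omega) (by omega)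
  have h4 : (4 : ZMod n) ≠ 0 := by
    exact_mod_cast ZMod.natCast_ne_zero_of_pos_of_lt (n := n) (m := 4) (by omega) (by omega)
  by_cases h₁ : G.Adj y (p (w + 1))
  · by_contra! hbad
    have hm1' := hbad w hw
    have hp3' := hbad (w + 2) hw₂
    rw [show w + 2 - 1 = w + 1 by ring, show w + 2 + 1 = w + 3 by ring] at hp3'
    rcases hmiss hm1 hp3 fun h ↦ h4 (by linear_combination h.symm) with h | h
    exacts [hm1' h h₁, hp3' h₁ h]
  · have hm1' : G.Adj y (p (w - 1)) :=
      (hmiss hm1 hp1 fun h ↦ h2 (by linear_combination h.symm)).resolve_right h₁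
    have hp3' : G.Adj y (p (w + 3)) :=
      (hmiss hp1 hp3 fun h ↦ h2 (by linear_combination h.symm)).resolve_left h₁
    have hwX : p w ∉ X := (hX _ _ hw).mp hxX
    have hw₂X : p (w + 2) ∉ X := (hX _ _ hw₂).mp hxX
    have := hmin.card_le_one_of_adj_add_three_of_adj_sub_one hadj hp hn hy hp3' hm1' fun t ht ↦
      ⟨by rintro rfl; exact hwX (hSX ht),
        by rintro rfl; exact hmin.notMem_of_adj_of_adj_add_two hadj hp (by omega) hx hxS hw hw₂ ht,
        by rintro rfl; exact hw₂X (hSX ht)⟩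
    omega

theorem exists_adj_sub_one_adj_add_one [DecidableRel G.Adj]
    (hmin : G.NoShorterFeasibleCycle S n) (hadj : ∀ t, G.Adj (p t) (p (t + 1)))
    (hp : Injective p) (hn : 6 ≤ n) (hX : ∀ a b, G.Adj a b → (a ∈ X ↔ b ∉ X)) (hSX : S ⊆ X)
    (h0 : p 0 ∈ S) (hS : 2 ≤ #{t | p t ∈ S}) (hx : ∀ t, p t ≠ x) (hy : ∀ t, p t ≠ y)
    (hxS : x ∈ S) (hyX : y ∉ X)
    (hcard : n / 2 + 1 ≤ #{t | G.Adj x (p t)} + #{t | G.Adj y (p t)}) :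
    ∃ u, G.Adj x (p u) ∧ G.Adj y (p (u - 1)) ∧ G.Adj y (p (u + 1)) := by
  have hE := two_mul_card_filter_mem hadj hX
  have hA := hmin.card_adj_le_two hadj hp hX h0 hx hxS
  have hBE := filter_adj_subset_filter_mem (p := p) hX hyX
  have hB := card_le_card hBE
  obtain hA₁ | hA₂ : #{t | G.Adj x (p t)} = 1 ∨ 1 < #{t | G.Adj x (p t)} := by omega
  · obtain ⟨u, hu⟩ := card_pos.mp (hA₁ ▸ Nat.one_pos)
    rw [mem_filter] at hu
    have hBX := eq_of_subset_of_card_le hBE (by omega)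
    have hyE {t} (ht : p t ∈ X) : G.Adj y (p t) := by
      have : t ∈ ({t | p t ∈ X} : Finset (ZMod n)) := by simpa
      rw [← hBX, mem_filter] at this
      exact this.2
    have hxX := hSX hxS
    exact ⟨u, hu.2, hyE (mem_of_adj_of_adj hX hu.2 (by simpa using (hadj (u - 1)).symm) hxX),
      hyE (mem_of_adj_of_adj hX hu.2 (hadj u) hxX)⟩
  · obtain ⟨a, ha, b, hb, hab⟩ := one_lt_card.mp hA₂
    rw [mem_filter] at ha hb
    have hB₁ : #{t | p t ∈ X} ≤ #{t | G.Adj y (p t)} + 1 := by omega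
    rcases hmin.val_eq_add_two_or hadj hp hX h0 hx hxS ha.2 hb.2 hab with h | h
    · rw [ZMod.eq_add_of_val_eq_add h, Nat.cast_ofNat] at hb
      exact hmin.exists_adj_sub_one_adj_add_one_of_adj_add_two hadj hp hn hX hSX hS hx hy hxS hyX
        hB₁ ha.2 hb.2
    · rw [ZMod.eq_add_of_val_eq_add h, Nat.cast_ofNat] at ha
      exact hmin.exists_adj_sub_one_adj_add_one_of_adj_add_two hadj hp hn hX hSX hS hx hy hxS hyX
        hB₁ hb.2 ha.2

end NoShorterFeasibleCycle

theorem Walk.exists_isCycle_reroute {v : V} {c : G.Walk v v} {p : ZMod c.length → V}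
    [NeZero c.length] (hp : Injective p) (hadj : ∀ t, G.Adj (p t) (p (t + 1)))
    (hC : ∀ w, w ∈ c.support ↔ ∃ t, p t = w) (hn : 3 ≤ c.length) {S : Finset V} {x y : V}
    (hxc : x ∉ c.support) (hyc : y ∉ c.support) (hxy : x ≠ y) (hyS : y ∉ S)
    {u : ZMod c.length} (hxu : G.Adj x (p u)) (huS : p u ∉ S) (h₁ : G.Adj y (p (u + 1)))
    (h₂ : G.Adj y (p (u - 1))) :
    ∃ (w : V) (c' : G.Walk w w), c'.IsCycle ∧
      c'.support.toFinset ⊆ insert x (insert y c.support.toFinset) ∧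
      c'.length = c.length ∧
      #(S ∩ c'.support.toFinset) = #(S ∩ c.support.toFinset) ∧
      ∃ yi ∈ c.support.toFinset, G.Adj x yi ∧ x ∉ c'.support ∧ yi ∉ c'.support := by
  have hy (t) : p t ≠ y := fun h ↦ hyc ((hC y).mpr ⟨t, h⟩)
  obtain ⟨D, hD, hDlen, hDsupp⟩ := exists_isCycle_replace hadj hp hn hy h₁ h₂
  refine ⟨y, D, hD, fun w hw ↦ ?_, hDlen, ?_, p u, by simpa using (hC _).mpr ⟨u, rfl⟩, hxu,
    ?_, ?_⟩
  · rw [List.mem_toFinset, hDsupp] at hw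
    rcases hw with rfl | ⟨t, -, rfl⟩ <;> simp [hC]
  · congr 1
    ext w
    simp only [mem_inter, List.mem_toFinset, hDsupp, hC]
    refine and_congr_right fun hw ↦ ⟨?_, ?_⟩
    · rintro (rfl | ⟨t, -, rfl⟩)
      exacts [absurd hw hyS, ⟨t, rfl⟩]
    · rintro ⟨t, rfl⟩
      exact Or.inr ⟨t, by rintro rfl; exact huS hw, rfl⟩
  · rw [hDsupp]
    rintro (rfl | ⟨t, -, h⟩)
    exacts [hxy rfl, hxc ((hC x).mpr ⟨t, h⟩)]
  · rw [hDsupp]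
    rintro (h | ⟨t, ht, h⟩)
    exacts [hy u h, ht (hp h)]

end SimpleGraph

open SimpleGraph

theorem rerouting_minimal_cycle_general {V : Type*} [DecidableEq V]
    (G : SimpleGraph V) [DecidableRel G.Adj]
    (X Y S : Finset V)
    (hdisj : Disjoint X Y)
    (hbip : ∀ u v : V, G.Adj u v → (u ∈ X ∧ v ∈ Y) ∨ (u ∈ Y ∧ v ∈ X))
    (hSX : S ⊆ X)
    (v : V) (c : G.Walk v v) (hc : c.IsCycle)
    (hlen : 6 ≤ c.length)
    (hfeas : 2 ≤ (S ∩ c.support.toFinset).card)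
    (hmin : ∀ (u : V) (c' : G.Walk u u), c'.IsCycle →
      2 ≤ (S ∩ c'.support.toFinset).card → c.length ≤ c'.length)
    (x y : V) (hx : x ∈ S) (hxc : x ∉ c.support)
    (hy : y ∈ Y) (hyc : y ∉ c.support)
    (he : c.length / 2 + 1 ≤
      (c.support.toFinset.filter (fun u => G.Adj x u)).card +
        (c.support.toFinset.filter (fun u => G.Adj y u)).card) :
    ¬ G.Adj x y ∧
    ∃ (u : V) (c' : G.Walk u u), c'.IsCycle ∧
      c'.support.toFinset ⊆ insert x (insert y c.support.toFinset) ∧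
      c'.length = c.length ∧
      (S ∩ c'.support.toFinset).card = (S ∩ c.support.toFinset).card ∧
      ∃ yi ∈ c.support.toFinset, G.Adj x yi ∧
        x ∉ c'.support ∧ yi ∉ c'.support := by
  obtain ⟨s₀, hs₀⟩ := card_pos.mp (show 0 < #(S ∩ c.support.toFinset) by omega)
  rw [mem_inter, List.mem_toFinset] at hs₀
  obtain ⟨p, hp, hadj, hC, h0⟩ := hc.exists_zmod_indexing hs₀.2
  have : NeZero c.length := ⟨by omega⟩
  have hmin : G.NoShorterFeasibleCycle S c.length := hmin
  have h0 : p 0 ∈ S := h0 ▸ hs₀.1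
  have hX := mem_iff_notMem_of_adj hdisj hbip
  have hyX : y ∉ X := disjoint_right.mp hdisj hy
  have hx' (t) : p t ≠ x := fun h ↦ hxc ((hC x).mpr ⟨t, h⟩)
  have hy' (t) : p t ≠ y := fun h ↦ hyc ((hC y).mpr ⟨t, h⟩)
  have hcard := card_filter_eq_card_filter_comp hp (s := c.support.toFinset) (by simpa using hC)
  rw [hcard, hcard] at he
  rw [inter_comm, ← filter_mem_eq_inter, hcard] at hfeas
  obtain ⟨u, hxu, hyu₁, hyu₂⟩ := hmin.exists_adj_sub_one_adj_add_one hadj hp hlen hX hSX h0 hfeas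
    hx' hy' hx hyX he
  refine ⟨hmin.not_adj hadj hp hlen hX hSX h0 hfeas hx' hy' hx hyX he,
    c.exists_isCycle_reroute hp hadj hC (by omega) hxc hyc (fun h ↦ hyX (h ▸ hSX hx)) ?_ hxu
      (fun h ↦ (hX _ _ hxu).mp (hSX hx) (hSX h)) hyu₂ hyu₁⟩
  exact fun h ↦ hyX (hSX h)

/-- Lemma 1(3): for a minimal feasible cycle C of length ≥ 6 and x ∈ S, y ∈ Y
off C with e({x,y}, C) ≥ |C|/2 + 1, we have xy ∉ E and G[V(C) ∪ {x,y}]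
contains a cycle C' with |C'| = |C|, |S ∩ V(C')| = |S ∩ V(C)|, together with
an edge from x to a vertex y_i of C disjoint from C'. -/
theorem rerouting_minimal_cycle {V : Type*} [Fintype V] [DecidableEq V]
    (G : SimpleGraph V) [DecidableRel G.Adj]
    (X Y S : Finset V)
    (hdisj : Disjoint X Y) (hcover : X ∪ Y = Finset.univ)
    (hbip : ∀ u v : V, G.Adj u v → (u ∈ X ∧ v ∈ Y) ∨ (u ∈ Y ∧ v ∈ X))
    (hSX : S ⊆ X)
    (v : V) (c : G.Walk v v) (hc : c.IsCycle)
    (hlen : 6 ≤ c.length)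
    (hfeas : 2 ≤ (S ∩ c.support.toFinset).card)
    (hmin : ∀ (u : V) (c' : G.Walk u u), c'.IsCycle →
      2 ≤ (S ∩ c'.support.toFinset).card → c.length ≤ c'.length)
    (x y : V) (hx : x ∈ S) (hxc : x ∉ c.support)
    (hy : y ∈ Y) (hyc : y ∉ c.support)
    (he : c.length / 2 + 1 ≤
      (c.support.toFinset.filter (fun u => G.Adj x u)).card +
        (c.support.toFinset.filter (fun u => G.Adj y u)).card) :
    ¬ G.Adj x y ∧
    ∃ (u : V) (c' : G.Walk u u), c'.IsCycle ∧
      c'.support.toFinset ⊆ insert x (insert y c.support.toFinset) ∧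
      c'.length = c.length ∧
      (S ∩ c'.support.toFinset).card = (S ∩ c.support.toFinset).card ∧
      ∃ yi ∈ c.support.toFinset, G.Adj x yi ∧
        x ∉ c'.support ∧ yi ∉ c'.support :=
  rerouting_minimal_cycle_general G X Y S hdisj hbip hSX v c hc hlen hfeas hmin x y hx hxc hy hyc he
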